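/- arXiv:2210.12699 — 2 statements merged into one kernel-verified Lean document; each statement's English description precedes it below -/
import Mathlib

section
/- Let T_{k+1} be obtained from three disjoint copies of a tournament T on vertex sets A, B, C by adding all arcs from A to B, from B to C, and from C to A. Let X ⊆ A ∪ B ∪ C with X_A = X ∩ A, X_B = X ∩ B, X_C = X ∩ C all nonempty. Then δ⁺(T_{k+1}[X]) = min{ δ⁺(T_{k+1}[X_A]) + |X_B|, δ⁺(T_{k+1}[X_B]) + |X_C|, δ⁺(T_{k+1}[X_C]) + |X_A| }. -/
open Finset

/-- Out-degree of `v` within the induced subdigraph on `X`. -/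
def outDegIn {V : Type*} [DecidableEq V] (A : V → V → Prop) [DecidableRel A]
    (X : Finset V) (v : V) : ℕ :=
  (X.filter (fun w => A v w)).card

/-- Minimum out-degree of the induced subdigraph on `X` (0 for the empty digraph). -/
def minOutDeg {V : Type*} [DecidableEq V] (A : V → V → Prop) [DecidableRel A]
    (X : Finset V) : ℕ :=
  if h : X.Nonempty then X.inf' h (outDegIn A X) else 0

/-- The cyclic triple construction: three copies of a digraph `A`, with all
arcs from copy `i` to copy `i+1` (mod 3). -/
def cyc {V : Type*} (A : V → V → Prop) : Fin 3 × V → Fin 3 × V → Prop :=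
  fun p q => if p.1 = q.1 then A p.2 q.2 else q.1 = p.1 + 1

instance {V : Type*} [DecidableEq V] (A : V → V → Prop) [DecidableRel A] :
    DecidableRel (cyc A) := fun p q => by unfold cyc; infer_instance

lemma inf'_add_const {α : Type*} (s : Finset α) (hs : s.Nonempty)
    (f : α → ℕ) (c : ℕ) : s.inf' hs (fun v => f v + c) = s.inf' hs f + c := by
  apply le_antisymm
  · obtain ⟨a, ha, hfa⟩ := Finset.exists_mem_eq_inf' hs f
    rw [hfa]
    exact Finset.inf'_le _ ha
  · exact Finset.le_inf' _ _ (fun b hb => Nat.add_le_add_right (Finset.inf'_le _ hb) c)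

lemma outDeg_split {V : Type*} [DecidableEq V] (A : V → V → Prop) [DecidableRel A]
    (X : Finset (Fin 3 × V)) (i : Fin 3) (v : Fin 3 × V) (hv : v.1 = i) :
    outDegIn (cyc A) X v
      = outDegIn (cyc A) (X.filter (fun p => p.1 = i)) v + (X.filter (fun p => p.1 = i + 1)).card := by
  classical
  have hne : i ≠ i + 1 := by fin_cases i <;> decide
  have h1 : X.filter (fun w => cyc A v w)
      = X.filter (fun w => (w.1 = i ∧ A v.2 w.2) ∨ w.1 = i + 1) := by
    apply Finset.filter_congr
    intro w hw
    unfold cyc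
    rw [hv]
    constructor
    · intro hc
      by_cases h : i = w.1
      · rw [if_pos h] at hc
        exact Or.inl ⟨h.symm, hc⟩
      · rw [if_neg h] at hc
        exact Or.inr hc
    · rintro (⟨h1, h2⟩ | h1)
      · rw [if_pos h1.symm]; exact h2
      · rw [if_neg (fun hh => hne (hh.trans h1))]; exact h1
  have h2 : X.filter (fun w => w.1 = i ∧ A v.2 w.2)
      = (X.filter (fun p => p.1 = i)).filter (fun w => cyc A v w) := by
    rw [Finset.filter_filter]
    apply Finset.filter_congr
    intro w hw
    unfold cyc
    rw [hv]
    constructor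
    · rintro ⟨ha, hb⟩
      exact ⟨ha, by rw [if_pos ha.symm]; exact hb⟩
    · rintro ⟨ha, hb⟩
      rw [if_pos ha.symm] at hb
      exact ⟨ha, hb⟩
  have hdisj : Disjoint ((X.filter (fun p => p.1 = i)).filter (fun w => cyc A v w))
      (X.filter (fun p => p.1 = i + 1)) := by
    rw [Finset.disjoint_left]
    intro w hw1 hw2
    have e1 : w.1 = i := (Finset.mem_filter.mp (Finset.mem_of_mem_filter w hw1)).2
    have e2 : w.1 = i + 1 := (Finset.mem_filter.mp hw2).2
    exact hne (e1 ▸ e2)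
  unfold outDegIn
  rw [h1, Finset.filter_or, h2, Finset.card_union_of_disjoint hdisj]

/-- If `X` meets all three copies `A`, `B`, `C` of the cyclic construction, then
`δ⁺(T[X]) = min { δ⁺(T[X_A]) + |X_B|, δ⁺(T[X_B]) + |X_C|, δ⁺(T[X_C]) + |X_A| }`. -/
theorem min_out_degree_cyclic_split {V : Type*} [Fintype V] [DecidableEq V]
    (A : V → V → Prop) [DecidableRel A]
    (hirr : ∀ v : V, ¬ A v v)
    (htour : ∀ u v : V, u ≠ v → (A u v ↔ ¬ A v u))
    (X : Finset (Fin 3 × V))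
    (XA XB XC : Finset (Fin 3 × V))
    (hA : XA = X.filter (fun p => p.1 = 0))
    (hB : XB = X.filter (fun p => p.1 = 1))
    (hC : XC = X.filter (fun p => p.1 = 2))
    (hAne : XA.Nonempty) (hBne : XB.Nonempty) (hCne : XC.Nonempty) :
    minOutDeg (cyc A) X =
      min (minOutDeg (cyc A) XA + XB.card)
        (min (minOutDeg (cyc A) XB + XC.card) (minOutDeg (cyc A) XC + XA.card)) := by
  subst hA hB hC
  set XA := X.filter (fun p => p.1 = 0) with hA
  set XB := X.filter (fun p => p.1 = 1) with hB
  set XC := X.filter (fun p => p.1 = 2) with hC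
  have hXne : X.Nonempty := hAne.mono (Finset.filter_subset _ X)
  have hXeq : X = XA ∪ (XB ∪ XC) := by
    ext p
    simp only [hA, hB, hC, Finset.mem_union, Finset.mem_filter]
    have hall : ∀ j : Fin 3, j = 0 ∨ j = 1 ∨ j = 2 := by decide
    have h3 := hall p.1
    tauto
  have k0 : ∀ v ∈ XA, outDegIn (cyc A) X v = outDegIn (cyc A) XA v + XB.card := by
    intro v hv
    have h := outDeg_split A X 0 v (Finset.mem_filter.mp hv).2
    have e : (0 : Fin 3) + 1 = 1 := by decide
    rw [e] at h
    exact h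
  have k1 : ∀ v ∈ XB, outDegIn (cyc A) X v = outDegIn (cyc A) XB v + XC.card := by
    intro v hv
    have h := outDeg_split A X 1 v (Finset.mem_filter.mp hv).2
    have e : (1 : Fin 3) + 1 = 2 := by decide
    rw [e] at h
    exact h
  have k2 : ∀ v ∈ XC, outDegIn (cyc A) X v = outDegIn (cyc A) XC v + XA.card := by
    intro v hv
    have h := outDeg_split A X 2 v (Finset.mem_filter.mp hv).2
    have e : (2 : Fin 3) + 1 = 0 := by decide
    rw [e] at h
    exact h
  unfold minOutDeg
  rw [dif_pos hXne, dif_pos hAne, dif_pos hBne, dif_pos hCne]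
  have hBCne : (XB ∪ XC).Nonempty := hBne.mono Finset.subset_union_left
  have hstep : X.inf' hXne (outDegIn (cyc A) X)
      = (XA ∪ (XB ∪ XC)).inf' (hXeq ▸ hXne) (outDegIn (cyc A) X) := by
    congr 1
  rw [hstep, Finset.inf'_union hAne hBCne, Finset.inf'_union hBne hCne]
  have eA : XA.inf' hAne (outDegIn (cyc A) X) = XA.inf' hAne (outDegIn (cyc A) XA) + XB.card := by
    rw [Finset.inf'_congr hAne rfl k0, inf'_add_const]
  have eB : XB.inf' hBne (outDegIn (cyc A) X) = XB.inf' hBne (outDegIn (cyc A) XB) + XC.card := by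
    rw [Finset.inf'_congr hBne rfl k1, inf'_add_const]
  have eC : XC.inf' hCne (outDegIn (cyc A) X) = XC.inf' hCne (outDegIn (cyc A) XC) + XA.card := by
    rw [Finset.inf'_congr hCne rfl k2, inf'_add_const]
  rw [eA, eB, eC]
end

section
/- For every integer k ≥ 1, setting n = (3^k − 1)/2 and s = n − 1, there exists a tournament D on 2n vertices with minimum out-degree at least s such that every induced subdigraph of D on n vertices has minimum out-degree at most s/2 − (k−1)/2 (equivalently, at most ((3^k−1)/2 − k)/2). -/
open Finset

/-!
`D` is `T_k` minus one vertex and `T_k` is regular of out-degree `n = (3^k - 1)/2`, so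
`δ⁺(D) ≥ n - 1`. For the upper bound let `w(m)` be the number of nonzero digits of `m` in balanced
ternary; then `w(n) = k`, since `n = 11…1` in base 3. By induction on `k`, every nonempty vertex
set `X` of `T_k` contains a vertex `v` with `2 d⁺_X(v) + w(|X|) ≤ |X|`. In the induction step `X`
splits into its parts `X_0, X_1, X_2` in the three copies of `T_{k-1}`, and a vertex of `X_i` has
out-degree its out-degree inside `X_i` plus `|X_{i+1}|`. As `w` is 1-Lipschitz and invariant under
tripling, comparing `|X|` with the nearest multiple `3m` of three and `m` with `|X_i|` yields an `i`
with `X_i ≠ ∅` and `w(|X|) + |X_{i+1}| ≤ w(|X_i|) + |X_{i+2}|`; the induction hypothesis in `X_i`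
then gives the vertex.
-/

/-- The number of nonzero digits of `n` in balanced ternary (digits `-1, 0, 1`). -/
def btWeight (n : ℕ) : ℕ :=
  if n = 0 then 0
  else if n % 3 = 0 then btWeight (n / 3)
  else if n % 3 = 1 then btWeight (n / 3) + 1
  else btWeight (n / 3 + 1) + 1
decreasing_by all_goals omega

@[simp] lemma btWeight_zero : btWeight 0 = 0 := by
  rw [btWeight, if_pos rfl]

lemma btWeight_three_mul (q : ℕ) : btWeight (3 * q) = btWeight q := by
  rcases Nat.eq_zero_or_pos q with rfl | hq
  · rfl
  · rw [btWeight, if_neg (by omega), if_pos (by omega), Nat.mul_div_cancel_left _ (by norm_num)]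

lemma btWeight_three_mul_add_one (q : ℕ) : btWeight (3 * q + 1) = btWeight q + 1 := by
  rw [btWeight, if_neg (by omega), if_neg (by omega), if_pos (by omega)]
  congr 2; omega

lemma btWeight_three_mul_add_two (q : ℕ) : btWeight (3 * q + 2) = btWeight (q + 1) + 1 := by
  rw [btWeight, if_neg (by omega), if_neg (by omega), if_neg (by omega)]
  congr 3; omega

lemma dist_btWeight_succ_le_one (x : ℕ) : Nat.dist (btWeight (x + 1)) (btWeight x) ≤ 1 := by
  induction x using Nat.strong_induction_on with
  | _ x ih =>
    obtain ⟨q, rfl | rfl | rfl⟩ : ∃ q, x = 3 * q ∨ x = 3 * q + 1 ∨ x = 3 * q + 2 :=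
      ⟨x / 3, by omega⟩
    · simp [btWeight_three_mul_add_one, btWeight_three_mul, Nat.dist]
    · have := ih q (by omega)
      rw [btWeight_three_mul_add_one, show 3 * q + 1 + 1 = 3 * q + 2 by rfl,
        btWeight_three_mul_add_two]
      unfold Nat.dist at *; omega
    · rw [show 3 * q + 2 + 1 = 3 * (q + 1) by ring, btWeight_three_mul,
        btWeight_three_mul_add_two]
      simp [Nat.dist]

lemma dist_btWeight_le (x y : ℕ) : Nat.dist (btWeight x) (btWeight y) ≤ Nat.dist x y := by
  wlog hxy : x ≤ y generalizing x y
  · rw [Nat.dist_comm, Nat.dist_comm x]; exact this y x (by omega)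
  obtain ⟨d, rfl⟩ := Nat.exists_eq_add_of_le hxy
  induction d with
  | zero => simp
  | succ d ih =>
    calc Nat.dist (btWeight x) (btWeight (x + (d + 1)))
        ≤ Nat.dist (btWeight x) (btWeight (x + d)) +
            Nat.dist (btWeight (x + d)) (btWeight (x + d + 1)) :=
          Nat.dist.triangle_inequality _ _ _
      _ ≤ Nat.dist x (x + d) + 1 := by
          gcongr
          · exact ih (by omega)
          · rw [Nat.dist_comm]; exact dist_btWeight_succ_le_one _
      _ = Nat.dist x (x + (d + 1)) := by simp [Nat.dist]

lemma btWeight_le_add_dist (x y : ℕ) : btWeight x ≤ btWeight y + Nat.dist x y := by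
  have := dist_btWeight_le x y
  unfold Nat.dist at *; omega

lemma btWeight_add_add_le {a b c : ℕ}
    (h : b = 0 ∨ ∃ m, Nat.dist m a + Nat.dist (a + b + c) (3 * m) + b ≤ c) :
    btWeight (a + b + c) + b ≤ btWeight a + c := by
  obtain rfl | ⟨m, hm⟩ := h
  · simpa [Nat.dist] using btWeight_le_add_dist (a + c) a
  · have h₁ := btWeight_le_add_dist (a + b + c) (3 * m)
    have h₂ := btWeight_le_add_dist m a
    rw [btWeight_three_mul] at h₁
    omega

lemma exists_btWeight_add_le (c : ℕ → ℕ) (h : 1 ≤ c 0 + c 1 + c 2) :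
    ∃ i < 3, 1 ≤ c i ∧
      btWeight (c 0 + c 1 + c 2) + c ((i + 1) % 3) ≤ btWeight (c i) + c ((i + 2) % 3) := by
  -- `3 * m` is the multiple of three nearest to the total
  obtain ⟨m, hm⟩ : ∃ m, m = (c 0 + c 1 + c 2 + 1) / 3 := ⟨_, rfl⟩
  have key :
      (1 ≤ c 0 ∧ (c 1 = 0 ∨ Nat.dist m (c 0) + Nat.dist (c 0 + c 1 + c 2) (3 * m) + c 1 ≤ c 2)) ∨
      (1 ≤ c 1 ∧ (c 2 = 0 ∨ Nat.dist m (c 1) + Nat.dist (c 1 + c 2 + c 0) (3 * m) + c 2 ≤ c 0)) ∨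
      (1 ≤ c 2 ∧ (c 0 = 0 ∨ Nat.dist m (c 2) + Nat.dist (c 2 + c 0 + c 1) (3 * m) + c 0 ≤ c 1)) := by
    unfold Nat.dist; omega
  rcases key with ⟨hpos, hc⟩ | ⟨hpos, hc⟩ | ⟨hpos, hc⟩
  · exact ⟨0, by norm_num, hpos, btWeight_add_add_le (hc.imp_right (⟨m, ·⟩))⟩
  · refine ⟨1, by norm_num, hpos, ?_⟩
    have := btWeight_add_add_le (hc.imp_right (⟨m, ·⟩))
    rwa [show c 1 + c 2 + c 0 = c 0 + c 1 + c 2 by ring] at this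
  · refine ⟨2, by norm_num, hpos, ?_⟩
    have := btWeight_add_add_le (hc.imp_right (⟨m, ·⟩))
    rwa [show c 2 + c 0 + c 1 = c 0 + c 1 + c 2 by ring] at this

lemma btWeight_three_pow_sub_one_div_two (k : ℕ) : btWeight ((3 ^ k - 1) / 2) = k := by
  induction k with
  | zero => simp
  | succ k ih =>
    have : (3 ^ (k + 1) - 1) / 2 = 3 * ((3 ^ k - 1) / 2) + 1 := by
      obtain ⟨r, hr⟩ : Odd (3 ^ k) := Odd.pow (by decide)
      rw [pow_succ, hr]; omega
    rw [this, btWeight_three_mul_add_one, ih]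

section InducedDigraph

variable {V : Type*} [DecidableEq V] {A : V → V → Prop} [DecidableRel A]

lemma minOutDeg_le {X : Finset V} {v : V} (hv : v ∈ X) : minOutDeg A X ≤ outDegIn A X v := by
  rw [minOutDeg, dif_pos ⟨v, hv⟩]
  exact inf'_le _ hv

lemma le_minOutDeg {X : Finset V} {m : ℕ} (hX : X.Nonempty) (h : ∀ v ∈ X, m ≤ outDegIn A X v) :
    m ≤ minOutDeg A X := by
  rw [minOutDeg, dif_pos hX]
  exact le_inf' hX _ h

lemma outDegIn_insert_le (X : Finset V) (x v : V) :
    outDegIn A (insert x X) v ≤ outDegIn A X v + 1 := by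
  rw [outDegIn, outDegIn, filter_insert]
  split_ifs
  · exact card_insert_le _ _
  · exact Nat.le_succ _

lemma outDegIn_comap {W : Type*} [DecidableEq W] (f : W ↪ V) (X : Finset W) (v : W) :
    outDegIn (fun u w => A (f u) (f w)) X v = outDegIn A (X.map f) (f v) := by
  simp only [outDegIn, filter_map, card_map]
  rfl

end InducedDigraph

lemma card_filter_mod_three (X : Finset ℕ) {i : ℕ} (hi : i < 3) :
    #(X.filter (· % 3 = i)) + #(X.filter (· % 3 = (i + 1) % 3)) +
      #(X.filter (· % 3 = (i + 2) % 3)) = #X := by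
  have := card_eq_sum_card_fiberwise (s := X) (f := (· % 3)) (t := range 3)
    (fun x _ => mem_range.mpr (Nat.mod_lt x (by norm_num)))
  simp only [sum_range_succ, sum_range_zero, zero_add] at this
  interval_cases i <;> simp only [Nat.reduceAdd, Nat.reduceMod] <;> omega

lemma injOn_div_three_filter_mod (X : Finset ℕ) (r : ℕ) :
    Set.InjOn (· / 3) (X.filter (· % 3 = r) : Set ℕ) := by
  intro x hx y hy hxy
  simp only [coe_filter, Set.mem_ofPred_eq] at hx hy hxy
  omega

lemma image_div_three_filter_mod_range (m : ℕ) {r : ℕ} (hr : r < 3) :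
    ((range (3 * m)).filter (· % 3 = r)).image (· / 3) = range m := by
  ext z
  simp only [mem_image, mem_filter, mem_range]
  exact ⟨by omega, fun hz => ⟨3 * z + r, by omega⟩⟩

/-- The paper's tournament `T_k` on `{0, …, 3^k - 1}`: the residue classes mod 3 span copies of
`T_{k-1}`, and class `i` beats class `i + 1`. -/
def ternaryTournament : ℕ → ℕ → ℕ → Bool
  | 0, _, _ => false
  | k + 1, u, v =>
    if u % 3 = v % 3 then ternaryTournament k (u / 3) (v / 3) else v % 3 == (u % 3 + 1) % 3

namespace ternaryTournament

lemma irrefl (k u : ℕ) : ternaryTournament k u u = false := by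
  induction k generalizing u with
  | zero => rfl
  | succ k ih => simp [ternaryTournament, ih]

lemma asymm {k u v : ℕ} (hu : u < 3 ^ k) (hv : v < 3 ^ k) (huv : u ≠ v) :
    ternaryTournament k u v = !ternaryTournament k v u := by
  induction k generalizing u v with
  | zero => omega
  | succ k ih =>
    rw [pow_succ] at hu hv
    by_cases h : u % 3 = v % 3
    · simp only [ternaryTournament, if_pos h, if_pos h.symm]
      exact ih (by omega) (by omega) (by omega)
    · simp only [ternaryTournament, if_neg h, if_neg (Ne.symm h)]
      have := Nat.mod_lt u (show 3 > 0 by norm_num)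
      have := Nat.mod_lt v (show 3 > 0 by norm_num)
      simp only [Bool.eq_not_iff, ne_eq, beq_eq_decide, decide_eq_decide]
      omega

lemma outDegIn_succ (k : ℕ) (X : Finset ℕ) (v : ℕ) :
    outDegIn (ternaryTournament (k + 1) · ·) X v =
      outDegIn (ternaryTournament k · ·) ((X.filter (· % 3 = v % 3)).image (· / 3)) (v / 3) +
        #(X.filter (· % 3 = (v % 3 + 1) % 3)) := by
  have hsplit : X.filter (ternaryTournament (k + 1) v ·) =
      X.filter (fun w => w % 3 = v % 3 ∧ ternaryTournament k (v / 3) (w / 3)) ∪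
        X.filter (· % 3 = (v % 3 + 1) % 3) := by
    rw [← filter_or]
    refine filter_congr fun w _ => ?_
    simp only [ternaryTournament, eq_comm (a := v % 3)]
    split_ifs with h
    · simp only [h, true_and, Nat.mod_add_mod, iff_self_or]
      omega
    · simp only [h, Nat.mod_add_mod, beq_iff_eq, false_and, false_or]
  have hdisj : Disjoint (X.filter (fun w => w % 3 = v % 3 ∧ ternaryTournament k (v / 3) (w / 3)))
      (X.filter (· % 3 = (v % 3 + 1) % 3)) :=
    disjoint_filter.mpr fun w _ h₁ h₂ => by omega
  rw [outDegIn, outDegIn, hsplit, card_union_of_disjoint hdisj, filter_image,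
    card_image_of_injOn ((injOn_div_three_filter_mod X _).mono (filter_subset _ _)), filter_filter]

lemma outDegIn_range {k v : ℕ} (hv : v < 3 ^ k) :
    outDegIn (ternaryTournament k · ·) (range (3 ^ k)) v = (3 ^ k - 1) / 2 := by
  induction k generalizing v with
  | zero => simp [outDegIn, ternaryTournament]
  | succ k ih =>
    have hclass (r : ℕ) (hr : r < 3) := image_div_three_filter_mod_range (3 ^ k) hr
    have hcard (r : ℕ) (hr : r < 3) : #((range (3 * 3 ^ k)).filter (· % 3 = r)) = 3 ^ k := by
      rw [← card_image_of_injOn (injOn_div_three_filter_mod _ r), hclass r hr, card_range]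
    rw [pow_succ] at hv
    rw [outDegIn_succ, pow_succ, mul_comm, hclass _ (Nat.mod_lt _ (by norm_num)),
      hcard _ (Nat.mod_lt _ (by norm_num)), ih (by omega)]
    obtain ⟨r, hr⟩ : Odd (3 ^ k) := Odd.pow (by decide)
    omega

theorem exists_two_mul_outDegIn_add_btWeight_le (k : ℕ) {X : Finset ℕ}
    (hX : X ⊆ range (3 ^ k)) (hne : X.Nonempty) :
    ∃ v ∈ X, 2 * outDegIn (ternaryTournament k · ·) X v + btWeight #X ≤ #X := by
  induction k generalizing X with
  | zero =>
    obtain rfl : X = {0} := by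
      rwa [pow_zero, range_one, subset_singleton_iff, or_iff_right hne.ne_empty] at hX
    refine ⟨0, mem_singleton_self 0, ?_⟩
    simpa [outDegIn, ternaryTournament] using (btWeight_three_mul_add_one 0).le
  | succ k ih =>
    obtain ⟨i, hi, hpos, hweight⟩ :=
      exists_btWeight_add_le (fun r => #(X.filter (· % 3 = r))) (by
        rw [card_filter_mod_three X (by norm_num : 0 < 3)]; exact card_pos.mpr hne)
    rw [card_filter_mod_three X (by norm_num : 0 < 3)] at hweight
    have hY : (X.filter (· % 3 = i)).image (· / 3) ⊆ range (3 ^ k) := by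
      intro y hy
      obtain ⟨x, hx, rfl⟩ := mem_image.mp hy
      have := mem_range.mp (hX (mem_filter.mp hx).1)
      rw [pow_succ] at this
      exact mem_range.mpr (by omega)
    obtain ⟨_, hu, hdeg⟩ := ih hY ((card_pos.mp hpos).image _)
    obtain ⟨v, hv, rfl⟩ := mem_image.mp hu
    obtain ⟨hvX, rfl⟩ := mem_filter.mp hv
    refine ⟨v, hvX, ?_⟩
    rw [card_image_of_injOn (injOn_div_three_filter_mod X _)] at hdeg
    have hsum := card_filter_mod_three X hi
    rw [outDegIn_succ]
    omega

end ternaryTournament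

/-- For every `k ≥ 1` and `n = (3^k - 1)/2`, `s = n - 1`, there is a tournament
on `2n` vertices of minimum out-degree at least `s` in which every induced
subdigraph on `n` vertices has minimum out-degree at most `((3^k - 1)/2 - k)/2`
(i.e. at most `s/2 - (k - 1)/2`). -/
theorem exists_bad_tournament (k : ℕ) (hk : 1 ≤ k) :
    ∃ A : Fin (2 * ((3 ^ k - 1) / 2)) → Fin (2 * ((3 ^ k - 1) / 2)) → Bool,
      (∀ v, A v v = false) ∧
      (∀ u v, u ≠ v → A u v = ! A v u) ∧
      (3 ^ k - 1) / 2 - 1 ≤ minOutDeg (fun u v => A u v = true) Finset.univ ∧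
      ∀ X : Finset (Fin (2 * ((3 ^ k - 1) / 2))), X.card = (3 ^ k - 1) / 2 →
        minOutDeg (fun u v => A u v = true) X ≤ ((3 ^ k - 1) / 2 - k) / 2 := by
  set n := (3 ^ k - 1) / 2
  obtain ⟨r, hr⟩ : Odd (3 ^ k) := Odd.pow (by decide)
  have h3k : 3 ≤ 3 ^ k := by simpa using Nat.pow_le_pow_right (show 0 < 3 by norm_num) hk
  have hN : 2 * n + 1 = 3 ^ k := by omega
  have hcomap (X : Finset (Fin (2 * n))) (v : Fin (2 * n)) :
      outDegIn (fun u w : Fin (2 * n) => ternaryTournament k u w = true) X v =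
        outDegIn (ternaryTournament k · ·) (X.map Fin.valEmbedding) v :=
    outDegIn_comap (A := (ternaryTournament k · ·)) Fin.valEmbedding X v
  refine ⟨fun u v => ternaryTournament k u v, fun v => ternaryTournament.irrefl k v,
    fun u v huv => ternaryTournament.asymm (by omega) (by omega) (Fin.val_ne_of_ne huv), ?_, ?_⟩
  · refine le_minOutDeg ⟨⟨0, by omega⟩, mem_univ _⟩ fun v _ => ?_
    have hdeg := outDegIn_insert_le (A := (ternaryTournament k · ·)) (range (2 * n)) (2 * n) v
    rw [← range_add_one, hN, ternaryTournament.outDegIn_range (by omega)] at hdeg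
    rw [hcomap, Fin.map_valEmbedding_univ, Nat.Iio_eq_range]
    omega
  · intro X hX
    have hX3k : X.map Fin.valEmbedding ⊆ range (3 ^ k) := fun x hx => by
      obtain ⟨v, -, rfl⟩ := mem_map.mp hx
      exact mem_range.mpr (by rw [Fin.valEmbedding_apply]; omega)
    obtain ⟨_, hv, hdeg⟩ := ternaryTournament.exists_two_mul_outDegIn_add_btWeight_le k hX3k
      ((card_pos.mp (by omega)).map)
    obtain ⟨v, hvX, rfl⟩ := mem_map.mp hv
    rw [card_map, hX, btWeight_three_pow_sub_one_div_two, Fin.valEmbedding_apply] at hdeg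
    refine (minOutDeg_le hvX).trans ?_
    rw [hcomap]
    omega
end
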